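/- Under covariate shift only, H_train(Y | T_train(X)) = H_train(Y | T_ideal(X)), where T_train is sufficient under p_train and T_ideal is sufficient under p_ideal. -/
import Mathlib


open Finset

noncomputable section

variable {𝒳 𝒴 𝒯 : Type*}

/-- Marginal distribution of `X` under the joint distribution `p`. -/
def margX [Fintype 𝒴] (p : 𝒳 → 𝒴 → ℝ) (x : 𝒳) : ℝ := ∑ y, p x y

/-- Probability that the statistic `T(X) = t`. -/
def probT [Fintype 𝒳] [Fintype 𝒴] [DecidableEq 𝒯] (p : 𝒳 → 𝒴 → ℝ) (f : 𝒳 → 𝒯) (t : 𝒯) : ℝ :=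
  ∑ x, if f x = t then margX p x else 0

/-- Joint probability that `Y = y` and `T(X) = t`. -/
def probYT [Fintype 𝒳] [DecidableEq 𝒯] (p : 𝒳 → 𝒴 → ℝ) (f : 𝒳 → 𝒯) (y : 𝒴) (t : 𝒯) : ℝ :=
  ∑ x, if f x = t then p x y else 0

/-- `T` is a sufficient statistic of `X` for `Y`: `p(y | T(x), x) = p(y | T(x))`
(conditioning on `(T(x), x)` is conditioning on `x`, since `T` is deterministic). -/
def Sufficient [Fintype 𝒳] [Fintype 𝒴] [DecidableEq 𝒯] (p : 𝒳 → 𝒴 → ℝ) (f : 𝒳 → 𝒯) : Prop :=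
  ∀ x y, 0 < margX p x →
    p x y / margX p x = probYT p f y (f x) / probT p f (f x)

/-- Conditional Shannon entropy `H(Y | T(X))` under the joint distribution `p`. -/
def condEntropyY [Fintype 𝒳] [Fintype 𝒴] [Fintype 𝒯] [DecidableEq 𝒯]
    (p : 𝒳 → 𝒴 → ℝ) (f : 𝒳 → 𝒯) : ℝ :=
  -∑ t, ∑ y, probYT p f y t * Real.log (probYT p f y t / probT p f t)

section Aux

variable [Fintype 𝒳] [Fintype 𝒴]

lemma margX_nonneg (p : 𝒳 → 𝒴 → ℝ) (h0 : ∀ x y, 0 ≤ p x y) (x : 𝒳) : 0 ≤ margX p x :=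
  Finset.sum_nonneg fun y _ => h0 x y

lemma le_margX (p : 𝒳 → 𝒴 → ℝ) (h0 : ∀ x y, 0 ≤ p x y) (x : 𝒳) (y : 𝒴) :
    p x y ≤ margX p x :=
  Finset.single_le_sum (fun y _ => h0 x y) (Finset.mem_univ y)

def HYX (p : 𝒳 → 𝒴 → ℝ) : ℝ := -∑ x, ∑ y, p x y * Real.log (p x y / margX p x)

lemma condEntropy_eq_HYX [Fintype 𝒯] [DecidableEq 𝒯] (p : 𝒳 → 𝒴 → ℝ)
    (h0 : ∀ x y, 0 ≤ p x y) (f : 𝒳 → 𝒯) (hf : Sufficient p f) :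
    condEntropyY p f = HYX p := by
  unfold condEntropyY HYX
  congr 1
  have key : ∀ x y, p x y * Real.log (probYT p f y (f x) / probT p f (f x))
      = p x y * Real.log (p x y / margX p x) := by
    intro x y
    rcases eq_or_lt_of_le (h0 x y) with h | h
    · simp [← h]
    · have hm : 0 < margX p x := lt_of_lt_of_le h (le_margX p h0 x y)
      rw [← hf x y hm]
  calc ∑ t, ∑ y, probYT p f y t * Real.log (probYT p f y t / probT p f t)
      = ∑ t, ∑ y, ∑ x, (if f x = t then p x y * Real.log (probYT p f y t / probT p f t) else 0) := by
        simp only [probYT, Finset.sum_mul, ite_mul, zero_mul]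
    _ = ∑ y, ∑ x, p x y * Real.log (probYT p f y (f x) / probT p f (f x)) := by
        rw [Finset.sum_comm]
        refine Finset.sum_congr rfl fun y _ => ?_
        rw [Finset.sum_comm]
        refine Finset.sum_congr rfl fun x _ => ?_
        simp
    _ = ∑ x, ∑ y, p x y * Real.log (p x y / margX p x) := by
        rw [Finset.sum_comm]
        simp only [key]

end Aux

/-- Under covariate shift only, `H_train(Y | T_train(X)) = H_train(Y | T_ideal(X))`,
where `T_train` is sufficient under `p_train` and `T_ideal` is sufficient under `p_ideal`. -/
theorem covariate_shift_condEntropyY_eq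
    {𝒯i 𝒯t : Type*} [Fintype 𝒳] [Fintype 𝒴] [Fintype 𝒯i] [Fintype 𝒯t]
    [DecidableEq 𝒯i] [DecidableEq 𝒯t]
    (ptr pid : 𝒳 → 𝒴 → ℝ)
    (htr0 : ∀ x y, 0 ≤ ptr x y) (htr1 : ∑ x, ∑ y, ptr x y = 1)
    (hid0 : ∀ x y, 0 ≤ pid x y) (hid1 : ∑ x, ∑ y, pid x y = 1)
    (hsupp : ∀ x, 0 < margX ptr x → 0 < margX pid x)
    (hcond : ∀ x y, 0 < margX ptr x → ptr x y / margX ptr x = pid x y / margX pid x)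
    (Tid : 𝒳 → 𝒯i) (Ttr : 𝒳 → 𝒯t)
    (hTid : Sufficient pid Tid)
    (hTtr : Sufficient ptr Ttr) :
    condEntropyY ptr Ttr = condEntropyY ptr Tid := by
  have hsuffid : Sufficient ptr Tid := by
    intro x y hx
    set t := Tid x with ht
    set c := probYT pid Tid y t / probT pid Tid t with hc
    have hkey : ∀ x', Tid x' = t → ptr x' y = c * margX ptr x' := by
      intro x' hx'
      rcases eq_or_lt_of_le (margX_nonneg ptr htr0 x') with h | h
      · have h1 : ptr x' y = 0 :=
          le_antisymm (by rw [h]; exact le_margX ptr htr0 x' y) (htr0 x' y)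
        simp [h1, ← h]
      · have hpid := hsupp x' h
        have e1 := hcond x' y h
        have e2 := hTid x' y hpid
        rw [hx'] at e2
        have e3 : ptr x' y / margX ptr x' = c := by rw [e1, e2, hc]
        exact (div_eq_iff h.ne').mp e3
    have hYT : probYT ptr Tid y t = c * probT ptr Tid t := by
      unfold probYT probT
      rw [Finset.mul_sum]
      refine Finset.sum_congr rfl fun x' _ => ?_
      by_cases h : Tid x' = t
      · simp [h, hkey x' h]
      · simp [h]
    have hTpos : 0 < probT ptr Tid t := by
      have hle : margX ptr x ≤ probT ptr Tid t := by
        unfold probT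
        have := Finset.single_le_sum
          (f := fun x' => if Tid x' = t then margX ptr x' else 0)
          (fun x' _ => by
            by_cases h : Tid x' = t
            · simpa [h] using margX_nonneg ptr htr0 x'
            · simp [h])
          (Finset.mem_univ x)
        simpa [← ht] using this
      exact lt_of_lt_of_le hx hle
    rw [hcond x y hx, hTid x y (hsupp x hx), ← ht, hYT, mul_div_assoc,
      div_self hTpos.ne', mul_one, hc]
  rw [condEntropy_eq_HYX ptr htr0 Ttr hTtr, condEntropy_eq_HYX ptr htr0 Tid hsuffid]
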